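/- arXiv:2508.08621 — 3 statements merged into one kernel-verified Lean document; each statement's English description precedes it below -/
import Mathlib

section
/- Let $q$ be a power of an odd prime and let $\alpha \in \mathbb{F}_q^\times$ be a square in $\mathbb{F}_q$. Then $x^{\frac{q^2+1}{2}} D_{\frac{q^2-1}{2}}(x^{-1},\alpha) = 2\, D_{\frac{q^2+1}{2}}\left(x, (16\alpha)^{-1}\right)$ as polynomials in $\mathbb{F}_q[x]$. -/
open Polynomial

lemma key_lemma {L : Type*} [Field L] (t : ℕ) (x y b j : L)
    (hx0 : x ≠ 0) (hy0 : y ≠ 0) (hb0 : b ≠ 0) (h2 : (2 : L) ≠ 0)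
    (hj : j ^ 2 = -1)
    (hyx : x * (y ^ 2 + b ^ 2) = y)
    (hfrob : ∀ z w : L, (z + w) ^ (8 * t + 1) = z ^ (8 * t + 1) + w ^ (8 * t + 1))
    (hbq : b ^ (8 * t + 1) = b)
    (hc : (4 * b) ^ (4 * t) = 1)
    (hyq : y ^ (8 * t + 1) = y ∨ y ^ (8 * t + 2) = b ^ 2) :
    ∃ u v : L, u * v = (16 * b ^ 2)⁻¹ ∧ u + v = x ∧
      x ^ (4 * t + 1) * (y ^ (4 * t) + (b ^ 2 / y) ^ (4 * t)) =
        2 * (u ^ (4 * t + 1) + v ^ (4 * t + 1)) := by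
  set A := y - j * b with hA
  set B := y + j * b with hB
  have h4 : (4 : L) ≠ 0 := fun h => h2 (mul_self_eq_zero.mp (by rw [show (2:L)*2 = 4 by norm_num, h]))
  have h16 : (16 : L) * b ^ 2 ≠ 0 := by
    refine mul_ne_zero (fun h => h4 ?_) (pow_ne_zero _ hb0)
    exact mul_self_eq_zero.mp (by rw [show (4:L)*4 = 16 by norm_num, h])
  have hAB : A * B = y ^ 2 + b ^ 2 := by rw [hA, hB]; linear_combination (-(b^2)) * hj
  have hABx : x * (A * B) = y := by rw [hAB]; exact hyx
  have hABne : A * B ≠ 0 := by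
    intro h; rw [h, mul_zero] at hABx; exact hy0 hABx.symm
  have hA0 : A ≠ 0 := fun h => hABne (by rw [h, zero_mul])
  have hB0 : B ≠ 0 := fun h => hABne (by rw [h, mul_zero])
  have hb8 : b ^ (8 * t) = 1 := by
    have h := hbq; rw [pow_succ] at h
    exact mul_right_cancel₀ hb0 (by rw [h, one_mul])
  have hj4 : j ^ (4 * t) = 1 := by
    rw [show 4*t = 2*(2*t) by ring, pow_mul, hj]
    exact Even.neg_one_pow ⟨t, by ring⟩
  have hj81 : j ^ (8 * t + 1) = j := by
    rw [pow_succ, show 8*t = 2*(4*t) by ring, pow_mul, hj,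
      Even.neg_one_pow ⟨2*t, by ring⟩, one_mul]
  have hA81 : A ^ (8 * t + 1) = y ^ (8 * t + 1) - j * b := by
    have h := hfrob y (-(j * b))
    rw [show y + -(j*b) = A by rw [hA]; ring] at h
    rw [h, Odd.neg_pow ⟨4*t, by ring⟩, mul_pow, hj81, hbq]; ring
  have hB81 : B ^ (8 * t + 1) = y ^ (8 * t + 1) + j * b := by
    have h := hfrob y (j * b)
    rw [← hB] at h
    rw [h, mul_pow, hj81, hbq]
  have hc4 : (4 * b) ^ (4 * t + 1) = 4 * b := by rw [pow_succ, hc, one_mul]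
  have hdiff : A^2 - B^2 = -(4*j*b*y) := by rw [hA, hB]; ring
  have hne1 : 4 * b * B ^ (4*t+1) ≠ 0 := mul_ne_zero (mul_ne_zero h4 hb0) (pow_ne_zero _ hB0)
  have hne2 : 4 * b * A ^ (4*t+1) ≠ 0 := mul_ne_zero (mul_ne_zero h4 hb0) (pow_ne_zero _ hA0)
  have hZ0 : A ^ (4*t+1) * B ^ (4*t+1) ≠ 0 :=
    mul_ne_zero (pow_ne_zero _ hA0) (pow_ne_zero _ hB0)
  refine ⟨j * A / (4 * b * B), -(j * B) / (4 * b * A), ?_, ?_, ?_⟩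
  · field_simp
    rw [show (4:L)^2 = 16 by norm_num, div_self (fun h => h16 (by rw [h, zero_mul]))]
    linear_combination -hj
  · field_simp
    linear_combination j*hdiff - 4*b*hABx - 4*b*y*hj
  · have hu : (j * A / (4 * b * B)) ^ (4*t+1) = j * A ^ (4*t+1) / (4 * b * B ^ (4*t+1)) := by
      rw [div_pow, mul_pow, mul_pow, pow_succ j, hj4, one_mul, hc4]
    have hv : (-(j * B) / (4 * b * A)) ^ (4*t+1) = -(j * B ^ (4*t+1)) / (4 * b * A ^ (4*t+1)) := by
      rw [div_pow, Odd.neg_pow ⟨2*t, by ring⟩, mul_pow, mul_pow, pow_succ j, hj4, one_mul, hc4]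
    rw [hu, hv]
    have hABM : x ^ (4*t+1) * (A ^ (4*t+1) * B ^ (4*t+1)) = y ^ (4*t+1) := by
      rw [← mul_pow, ← mul_pow, hABx]
    have hbb : (b ^ 2 / y) ^ (4 * t) = 1 / y ^ (4*t) := by
      rw [div_pow, ← pow_mul, show 2*(4*t) = 8*t by ring, hb8]
    rw [hbb]
    rcases hyq with hY | hY
    · have hy8 : y ^ (8 * t) = 1 := by
        have h := hY; rw [pow_succ] at h
        exact mul_right_cancel₀ hy0 (by rw [h, one_mul])
      have hA2 : A ^ (8*t+2) = A ^ 2 := by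
        rw [show 8*t+2 = (8*t+1)+1 by ring, pow_succ, hA81, hY, ← hA, sq]
      have hB2 : B ^ (8*t+2) = B ^ 2 := by
        rw [show 8*t+2 = (8*t+1)+1 by ring, pow_succ, hB81, hY, ← hB, sq]
      have key1 : j * A ^ (4*t+1) / (4 * b * B ^ (4*t+1)) + -(j * B ^ (4*t+1)) / (4 * b * A ^ (4*t+1))
          = y / (A ^ (4*t+1) * B ^ (4*t+1)) := by
        rw [div_add_div _ _ hne1 hne2, div_eq_div_iff (mul_ne_zero hne1 hne2) hZ0]
        linear_combination (4*b*j*(A^(4*t+1)*B^(4*t+1)))*hA2 -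
          (4*b*j*(A^(4*t+1)*B^(4*t+1)))*hB2 + (4*b*j*(A^(4*t+1)*B^(4*t+1)))*hdiff -
          (16*b^2*y*(A^(4*t+1)*B^(4*t+1)))*hj
      rw [key1]
      have hy4' : y ^ (4*t) + 1 / y ^ (4*t) = 2 / y ^ (4*t) := by
        rw [eq_div_iff (pow_ne_zero _ hy0), add_mul, div_mul_cancel₀ _ (pow_ne_zero _ hy0)]
        linear_combination hy8
      rw [hy4', mul_div_assoc', mul_div_assoc', div_eq_div_iff (pow_ne_zero _ hy0) hZ0]
      linear_combination 2*hABM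
    · have hA2 : y * A ^ (8*t+2) = -(j*b) * B * A := by
        rw [show A^(8*t+2) = A^(8*t+1)*A by ring, hA81, hA, hB]
        linear_combination (y - j*b)*hY + (y*b^2 - j*b^3)*hj
      have hB2 : y * B ^ (8*t+2) = (j*b) * A * B := by
        rw [show B^(8*t+2) = B^(8*t+1)*B by ring, hB81, hA, hB]
        linear_combination (y + j*b)*hY + (y*b^2 + j*b^3)*hj
      have key2 : j * A ^ (4*t+1) / (4 * b * B ^ (4*t+1)) + -(j * B ^ (4*t+1)) / (4 * b * A ^ (4*t+1))
          = 1 / (2 * x * (A ^ (4*t+1) * B ^ (4*t+1))) := by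
        rw [div_add_div _ _ hne1 hne2, div_eq_div_iff (mul_ne_zero hne1 hne2)
          (mul_ne_zero (mul_ne_zero h2 hx0) hZ0)]
        apply mul_left_cancel₀ hy0
        linear_combination (8*x*b*j*(A^(4*t+1)*B^(4*t+1)))*hA2 -
          (8*x*b*j*(A^(4*t+1)*B^(4*t+1)))*hB2 + (16*b^2*(A^(4*t+1)*B^(4*t+1)))*hABx -
          (16*x*b^2*(A^(4*t+1)*B^(4*t+1))*(A*B))*hj
      rw [key2]
      have hy4' : y ^ (4*t) + 1 / y ^ (4*t) = (y^2 + b^2) / (y^2 * y ^ (4*t)) := by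
        rw [eq_div_iff (mul_ne_zero (pow_ne_zero _ hy0) (pow_ne_zero _ hy0)), add_mul,
          div_mul_eq_mul_div, mul_comm (y^2) (y^(4*t)), ← mul_assoc,
          mul_div_assoc, mul_div_assoc]
        rw [one_mul, mul_comm (y^(4*t)) (y^2/y^(4*t)), div_mul_cancel₀ _ (pow_ne_zero _ hy0)]
        linear_combination hY
      rw [hy4']
      rw [show (2:L) * (1 / (2 * x * (A ^ (4*t+1) * B ^ (4*t+1)))) = 1 / (x * (A ^ (4*t+1) * B ^ (4*t+1))) by
        rw [eq_div_iff (mul_ne_zero hx0 hZ0)]; field_simp]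
      rw [mul_div_assoc', div_eq_div_iff (mul_ne_zero (pow_ne_zero _ hy0) (pow_ne_zero _ hy0)) (mul_ne_zero hx0 hZ0)]
      linear_combination (x^(4*t+1)*(A^(4*t+1)*B^(4*t+1)))*hyx + y*hABM

lemma dickson_one_eval_add {R : Type*} [CommRing R] (u v : R) :
    ∀ n, (dickson 1 (u * v) n).eval (u + v) = u ^ n + v ^ n
  | 0 => by norm_num [dickson_zero]
  | 1 => by simp
  | n + 2 => by
    rw [dickson_add_two, eval_sub, eval_mul, eval_mul, eval_X, eval_C,
      dickson_one_eval_add u v (n + 1), dickson_one_eval_add u v n]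
    ring

lemma natDegree_dickson_le {R : Type*} [CommRing R] (a : R) :
    ∀ n, (dickson 1 a n).natDegree ≤ n
  | 0 => by norm_num [dickson_zero]
  | 1 => by simpa using natDegree_X_le
  | n + 2 => by
    rw [dickson_add_two]
    refine (natDegree_sub_le _ _).trans (max_le ?_ ?_)
    · refine natDegree_mul_le.trans ?_
      have h1 := natDegree_dickson_le a (n + 1)
      have h2 : (X : R[X]).natDegree ≤ 1 := natDegree_X_le
      omega
    · refine natDegree_mul_le.trans ?_
      have h1 := natDegree_dickson_le a n
      have h2 : (C a : R[X]).natDegree = 0 := natDegree_C a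
      omega
lemma eval_reflect' {L : Type*} [Field L] (f : L[X]) (N : ℕ) (h : f.natDegree ≤ N)
    (x : L) (hx : x ≠ 0) : (f.reflect N).eval x = x ^ N * f.eval x⁻¹ := by
  have hinv : x⁻¹ ≠ 0 := inv_ne_zero hx
  letI : Invertible x⁻¹ := ⟨x, by field_simp, by field_simp⟩
  have H := eval₂_reflect_mul_pow (RingHom.id L) x⁻¹ N f h
  have hio : (⅟(x⁻¹) : L) = x := rfl
  rw [hio, eval₂_eq_eval_map, eval₂_eq_eval_map, map_id, map_id] at H
  rw [eq_comm, ← H]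
  field_simp
  rw [mul_comm, ← mul_assoc, ← mul_pow, one_div, inv_mul_cancel₀ hx, one_pow, one_mul]

lemma natDegree_reflect_le {R : Type*} [Semiring R] (f : R[X]) (N : ℕ) (h : f.natDegree ≤ N) :
    (f.reflect N).natDegree ≤ N := by
  apply natDegree_le_iff_coeff_eq_zero.mpr
  intro i hi
  rw [coeff_reflect, revAt_eq_self_of_lt hi]
  exact coeff_eq_zero_of_natDegree_lt (lt_of_le_of_lt h hi)

/-- For square `α`, the coefficient-reversal
`x^((q²+1)/2) D_{(q²-1)/2}(x⁻¹, α)` equals `2 D_{(q²+1)/2}(x, (16α)⁻¹)`. -/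
theorem dickson_reflect_half (F : Type*) [Field F] [Fintype F]
    (hodd : Odd (Fintype.card F)) (α : F) (hα : α ≠ 0) (hsq : IsSquare α) :
    (dickson 1 α ((Fintype.card F ^ 2 - 1) / 2)).reflect ((Fintype.card F ^ 2 + 1) / 2) =
      2 * dickson 1 (16 * α)⁻¹ ((Fintype.card F ^ 2 + 1) / 2) := by
  classical
  set q := Fintype.card F with hq
  obtain ⟨r, hr⟩ := hodd
  obtain ⟨k, hk⟩ := Nat.even_mul_succ_self r
  have hq2 : q ^ 2 = 8 * k + 1 := by
    have h1 : q ^ 2 = 4 * (r * (r + 1)) + 1 := by rw [hr]; ring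
    rw [h1, hk]; ring
  have hq1 : 1 < q := Fintype.one_lt_card
  have hq3 : 3 ≤ q := by omega
  have hk1 : 1 ≤ k := by nlinarith
  have hN : (q ^ 2 - 1) / 2 = 4 * k := by omega
  have hM : (q ^ 2 + 1) / 2 = 4 * k + 1 := by omega
  rw [hN, hM]
  obtain ⟨p, hp⟩ := CharP.exists F
  haveI := hp
  obtain ⟨s, hps, hcard⟩ := FiniteField.card F p
  haveI := Fact.mk hps
  rw [← hq] at hcard
  set L := AlgebraicClosure F with hL
  set ι : F →+* L := algebraMap F L with hι'
  have hι : Function.Injective ι := ι.injective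
  haveI : CharP L p := charP_of_injective_algebraMap hι p
  have hpodd : p ≠ 2 := by
    intro h
    have : 2 ∣ q := by rw [hcard, h]; exact dvd_pow_self 2 s.ne_zero
    omega
  have h2L : (2 : L) ≠ 0 := by
    have h := CharP.cast_eq_zero_iff L p 2
    intro hc
    have : ((2 : ℕ) : L) = 0 := by exact_mod_cast hc
    exact hpodd ((Nat.prime_dvd_prime_iff_eq hps Nat.prime_two).mp (h.mp this))
  have hfrob : ∀ z w : L, (z + w) ^ (8 * k + 1) = z ^ (8 * k + 1) + w ^ (8 * k + 1) := by
    intro z w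
    have he : 8 * k + 1 = p ^ (2 * (s : ℕ)) := by
      rw [← hq2, hcard, ← pow_mul, mul_comm]
    rw [he]
    exact add_pow_char_pow z w p (2 * (s : ℕ))
  have hzq : ∀ z : F, (ι z) ^ (8 * k + 1) = ι z := by
    intro z
    rw [← map_pow, show 8 * k + 1 = q * q by nlinarith, pow_mul,
      FiniteField.pow_card, FiniteField.pow_card]
  obtain ⟨β, hβ⟩ := hsq
  have hβ0 : β ≠ 0 := fun h => hα (by rw [hβ, h, mul_zero])
  set b : L := ι β with hb
  have hb0 : b ≠ 0 := by
    rw [hb]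
    intro h
    exact hβ0 (hι (by rw [map_zero]; exact h))
  have hb2 : b ^ 2 = ι α := by rw [hb, sq, ← map_mul, ← hβ]
  obtain ⟨j, hj⟩ := IsAlgClosed.exists_pow_nat_eq (-1 : L) (n := 2) (by norm_num)
  have h2F : (2 : F) ≠ 0 := by
    intro hc
    have h := CharP.cast_eq_zero_iff F p 2
    have : ((2 : ℕ) : F) = 0 := by exact_mod_cast hc
    exact hpodd ((Nat.prime_dvd_prime_iff_eq hps Nat.prime_two).mp (h.mp this))
  have h4F : (4 : F) ≠ 0 := fun h =>
    h2F (mul_self_eq_zero.mp (by rw [show (2:F)*2 = 4 by norm_num, h]))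
  have hcF : ((4 : F) * β) ^ (4 * k) = 1 := by
    have h2k : r * (r + 1) = 2 * k := by omega
    have h4k : 4 * k = (q - 1) * (r + 1) := by
      have e1 : q - 1 = 2 * r := by omega
      rw [e1]
      calc 4 * k = 2 * (2 * k) := by ring
        _ = 2 * (r * (r + 1)) := by rw [h2k]
        _ = 2 * r * (r + 1) := by ring
    rw [h4k, pow_mul, FiniteField.pow_card_sub_one_eq_one _ (mul_ne_zero h4F hβ0), one_pow]
  have hc : ((4 : L) * b) ^ (4 * k) = 1 := by
    have h4 : (4 : L) * b = ι ((4 : F) * β) := by rw [map_mul, map_ofNat]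
    rw [h4, ← map_pow, hcF, map_one]
  have hbq : b ^ (8 * k + 1) = b := hzq β
  -- pass to L
  apply Polynomial.map_injective ι hι
  rw [← reflect_map, Polynomial.map_mul, map_dickson, map_dickson]
  have hconst : ι (16 * α)⁻¹ = ((16 : L) * b ^ 2)⁻¹ := by
    rw [map_inv₀, map_mul, hb2, map_ofNat]
  have htwo : Polynomial.map ι (2 : F[X]) = 2 := Polynomial.map_ofNat ι 2
  rw [hconst, htwo]
  rw [← sub_eq_zero]
  -- the finset of (8k)-th roots of unity
  have h8k0 : 8 * k ≠ 0 := by omega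
  have hqL : ((q : ℕ) : L) = 0 := by
    rw [CharP.cast_eq_zero_iff L p q, hcard]
    exact dvd_pow_self p s.ne_zero
  have h8kL : ((8 * k : ℕ) : L) = -1 := by
    have h1 : ((8 * k + 1 : ℕ) : L) = ((q ^ 2 : ℕ) : L) := by rw [hq2]
    rw [Nat.cast_add, Nat.cast_one, Nat.cast_pow, hqL] at h1
    linear_combination h1
  have h8kL' : ((8 * k : ℕ) : L) ≠ 0 := by rw [h8kL]; exact neg_ne_zero.mpr one_ne_zero
  have hgne : (X ^ (8 * k) - C (1 : L)) ≠ 0 := X_pow_sub_C_ne_zero (by omega) 1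
  have hsep : (X ^ (8 * k) - C (1 : L)).Separable := separable_X_pow_sub_C 1 h8kL' one_ne_zero
  have hsplit : Splits (X ^ (8 * k) - C (1 : L)) := IsAlgClosed.splits _
  have hcardroots : Multiset.card (X ^ (8 * k) - C (1 : L)).roots = 8 * k := by
    rw [splits_iff_card_roots.mp hsplit, natDegree_X_pow_sub_C]
  apply eq_zero_of_natDegree_lt_card_of_eval_eq_zero' _ ((X ^ (8 * k) - C (1 : L)).roots.toFinset)
  · -- evaluation
    intro z hz
    have hzroot : (X ^ (8 * k) - C (1 : L)).eval z = 0 := by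
      exact (mem_roots hgne).mp (Multiset.mem_toFinset.mp hz)
    have hz8 : z ^ (8 * k) = 1 := by
      simpa [eval_sub, eval_pow, eval_X, eval_C, sub_eq_zero] using hzroot
    have hz0 : z ≠ 0 := by
      intro h
      rw [h, zero_pow h8k0] at hz8
      exact zero_ne_one hz8
    have hzq1 : z ^ (8 * k + 1) = z := by rw [pow_succ, hz8, one_mul]
    -- find y
    have hdeg2 : (X ^ 2 - C z⁻¹ * X + C (ι α) : L[X]).degree = 2 := by
      compute_degree!
    obtain ⟨y, hy⟩ := IsAlgClosed.exists_root (X ^ 2 - C z⁻¹ * X + C (ι α) : L[X])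
      (by rw [hdeg2]; norm_num)
    have hy' : y ^ 2 - z⁻¹ * y + ι α = 0 := by
      simpa [IsRoot, eval_add, eval_sub, eval_pow, eval_mul] using hy
    have hy0 : y ≠ 0 := by
      intro h
      rw [h] at hy'
      apply hα
      apply hι
      rw [map_zero]
      linear_combination hy'
    have hyx : z * (y ^ 2 + b ^ 2) = y := by
      rw [hb2]
      have h1 : y ^ 2 + ι α = z⁻¹ * y := by linear_combination hy'
      rw [h1, ← mul_assoc, mul_inv_cancel₀ hz0, one_mul]
    have hYq : z * ((y ^ (8 * k + 1)) ^ 2 + b ^ 2) = y ^ (8 * k + 1) := by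
      have h := congrArg (· ^ (8 * k + 1)) hyx
      rw [mul_pow, hfrob (y ^ 2) (b ^ 2), hzq1, ← pow_mul, ← pow_mul,
        mul_comm 2 (8 * k + 1), pow_mul, pow_mul, hbq] at h
      exact h
    have hyq : y ^ (8 * k + 1) = y ∨ y ^ (8 * k + 2) = b ^ 2 := by
      have hz' : z * ((y ^ (8 * k + 1) - y) * (y * y ^ (8 * k + 1) - b ^ 2)) = 0 := by
        linear_combination y * hYq - (y ^ (8 * k + 1)) * hyx
      rcases mul_eq_zero.mp hz' with h | h
      · exact absurd h hz0
      · rcases mul_eq_zero.mp h with h' | h'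
        · exact Or.inl (sub_eq_zero.mp h')
        · refine Or.inr ?_
          rw [show 8 * k + 2 = (8 * k + 1) + 1 by ring, pow_succ']
          exact sub_eq_zero.mp h'
    obtain ⟨u, v, huv, hsum, hmain⟩ :=
      key_lemma k z y b j hz0 hy0 hb0 h2L hj hyx hfrob hbq hc hyq
    rw [eval_sub, sub_eq_zero]
    rw [eval_reflect' _ _ ((natDegree_dickson_le _ _).trans (by omega)) z hz0]
    have hyv : y * (b ^ 2 / y) = ι α := by
      rw [mul_comm, div_mul_cancel₀ _ hy0, hb2]
    have hadd : y + b ^ 2 / y = z⁻¹ := by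
      have hzi : z * z⁻¹ = 1 := mul_inv_cancel₀ hz0
      rw [add_div' _ _ _ hy0, div_eq_iff hy0]
      linear_combination z⁻¹ * hyx - (y ^ 2 + b ^ 2) * hzi
    have e1 : (dickson 1 (ι α) (4 * k)).eval z⁻¹ = y ^ (4 * k) + (b ^ 2 / y) ^ (4 * k) := by
      rw [← hadd, ← hyv]
      exact dickson_one_eval_add y (b ^ 2 / y) (4 * k)
    have e2 : (dickson 1 ((16 : L) * b ^ 2)⁻¹ (4 * k + 1)).eval z = u ^ (4*k+1) + v ^ (4*k+1) := by
      rw [← huv, ← hsum]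
      exact dickson_one_eval_add u v _
    rw [e1, eval_mul, e2]
    have : ((2 : L[X])).eval z = 2 := by simp
    rw [this]
    exact hmain
  · -- cardinality
    have hcardfin : ((X ^ (8 * k) - C (1 : L)).roots.toFinset).card = 8 * k := by
      rw [Multiset.toFinset_card_of_nodup (nodup_roots hsep), hcardroots]
    rw [hcardfin]
    have d1 : ((dickson 1 (ι α) (4 * k)).reflect (4 * k + 1)).natDegree ≤ 4 * k + 1 :=
      natDegree_reflect_le _ _ ((natDegree_dickson_le _ _).trans (by omega))
    have d2 : ((2 : L[X]) * dickson 1 ((16 : L) * b ^ 2)⁻¹ (4 * k + 1)).natDegree ≤ 4 * k + 1 := by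
      refine natDegree_mul_le.trans ?_
      have := natDegree_dickson_le ((16 : L) * b ^ 2)⁻¹ (4 * k + 1)
      simp only [natDegree_ofNat]
      omega
    have := natDegree_sub_le ((dickson 1 (ι α) (4 * k)).reflect (4 * k + 1))
      ((2 : L[X]) * dickson 1 ((16 : L) * b ^ 2)⁻¹ (4 * k + 1))
    omega
end

section
/- Let $q$ be a prime power and $\alpha \in \mathbb{F}_q^\times$. Then for all $0 \le i \le q^2-1$ and all $\beta \in \mathbb{F}_q$, $D_{q^2-1-i}(\beta,\alpha) = \alpha^{-i} D_i(\beta,\alpha)$. Moreover, if $q$ is odd and $\alpha$ is a square in $\mathbb{F}_q$, then for all $0 \le i \le \frac{q^2-1}{2}$, $D_{\frac{q^2-1}{2}-i}(\beta,\alpha) = \alpha^{-i} D_i(\beta,\alpha)$ for all $\beta \in \mathbb{F}_q$. -/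
open Polynomial

/-- Evaluation of Dickson polynomials at a sum `x + z` with `x * z = a`. -/
lemma dickson_eval_add_of_mul_eq {R : Type*} [CommRing R] (a x z : R) (h : x * z = a) :
    ∀ n : ℕ, (dickson 1 a n).eval (x + z) = x ^ n + z ^ n
  | 0 => by simp [dickson]; norm_num
  | 1 => by simp [dickson]
  | n + 2 => by
    simp only [dickson_add_two, eval_sub, eval_mul, eval_X, eval_C,
      dickson_eval_add_of_mul_eq a x z h (n + 1), dickson_eval_add_of_mul_eq a x z h n]
    subst h; ring

lemma aux_sym {K : Type*} [Field K] (a : K) (ha : a ≠ 0) (y z : K) (hyz : y * z = a)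
    (N : ℕ) (hy : y ^ N = 1) (hz : z ^ N = 1) (i : ℕ) (hi : i ≤ N) :
    y ^ (N - i) + z ^ (N - i) = a⁻¹ ^ i * (y ^ i + z ^ i) := by
  have hy0 : y ≠ 0 := fun h => ha (by simp [← hyz, h])
  have hz0 : z ≠ 0 := fun h => ha (by simp [← hyz, h])
  have hyi : y⁻¹ = z * a⁻¹ := inv_eq_of_mul_eq_one_right (by
    rw [← mul_assoc, hyz, mul_inv_cancel₀ ha])
  have hzi : z⁻¹ = y * a⁻¹ := inv_eq_of_mul_eq_one_right (by
    rw [← mul_assoc, mul_comm z y, hyz, mul_inv_cancel₀ ha])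
  rw [pow_sub₀ y hy0 hi, pow_sub₀ z hz0 hi, hy, hz, one_mul, one_mul,
    ← inv_pow, ← inv_pow, hyi, hzi, mul_pow, mul_pow]
  ring

/-- Symmetry of Dickson polynomials: `D_{q²-1-i}(β, α) = α⁻ⁱ D_i(β, α)` for
`0 ≤ i ≤ q²-1`, and for odd `q` with `α` a square also
`D_{(q²-1)/2 - i}(β, α) = α⁻ⁱ D_i(β, α)` for `0 ≤ i ≤ (q²-1)/2`. -/
theorem dickson_symmetry (F : Type*) [Field F] [Fintype F] (α : F) (hα : α ≠ 0) :
    (∀ i ≤ Fintype.card F ^ 2 - 1, ∀ β : F,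
      (dickson 1 α (Fintype.card F ^ 2 - 1 - i)).eval β =
        α⁻¹ ^ i * (dickson 1 α i).eval β) ∧
    (Odd (Fintype.card F) → IsSquare α →
      ∀ i ≤ (Fintype.card F ^ 2 - 1) / 2, ∀ β : F,
        (dickson 1 α ((Fintype.card F ^ 2 - 1) / 2 - i)).eval β =
          α⁻¹ ^ i * (dickson 1 α i).eval β) := by
  set q := Fintype.card F with hqdef
  have hq1 : 1 ≤ q := Fintype.card_pos
  -- the algebraic closure
  let K := AlgebraicClosure F
  let φ : F →+* K := algebraMap F K
  have hinj : Function.Injective φ := φ.injective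
  have hα' : φ α ≠ 0 := fun h => hα (hinj (by simpa using h))
  -- characteristic
  obtain ⟨p, hchar⟩ := CharP.exists F
  haveI := hchar
  haveI : CharP K p := charP_of_injective_algebraMap hinj p
  haveI hpprime : Fact p.Prime := ⟨CharP.char_is_prime F p⟩
  obtain ⟨n, -, hcard⟩ := FiniteField.card F p
  have hsubq : ∀ x w : K, (x - w) ^ q = x ^ q - w ^ q := by
    intro x w; rw [hqdef, hcard]; exact sub_pow_char_pow (x := x) (y := w) _
  have hφq : ∀ x : F, (φ x) ^ q = φ x := by
    intro x; rw [← map_pow, FiniteField.pow_card]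
  -- A single lemma handling both statements
  have main : ∀ (N : ℕ),
      (∀ (β : F) (y z : K), y ^ 2 = φ β * y - φ α → z = φ β - y → y ^ N = 1 ∧ z ^ N = 1) →
      ∀ i ≤ N, ∀ β : F, (dickson 1 α (N - i)).eval β = α⁻¹ ^ i * (dickson 1 α i).eval β := by
    intro N hN i hi β
    -- find root y of X² - βX + α in K
    have hdeg : (X ^ 2 - C (φ β) * X + C (φ α) : K[X]).degree ≠ 0 := by
      have : (X ^ 2 - C (φ β) * X + C (φ α) : K[X]).degree = 2 := by
        compute_degree!
      rw [this]; norm_num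
    obtain ⟨y, hy⟩ := IsAlgClosed.exists_root _ hdeg
    have hyroot : y ^ 2 = φ β * y - φ α := by
      have := hy
      simp only [IsRoot, eval_add, eval_sub, eval_mul, eval_pow, eval_X, eval_C] at this
      linear_combination this
    set z : K := φ β - y with hzdef
    have hyz : y * z = φ α := by rw [hzdef]; linear_combination -hyroot
    have hsum : y + z = φ β := by rw [hzdef]; ring
    obtain ⟨hyN, hzN⟩ := hN β y z hyroot hzdef
    apply hinj
    have hmap : ∀ m : ℕ, φ ((dickson 1 α m).eval β) = y ^ m + z ^ m := by
      intro m
      rw [← eval₂_at_apply, ← eval_map, map_dickson]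
      rw [← hsum]
      exact dickson_eval_add_of_mul_eq (φ α) y z hyz m
    rw [map_mul, map_pow, map_inv₀, hmap, hmap]
    exact aux_sym (φ α) hα' y z hyz N hyN hzN i hi
  -- core: structure of roots of the quadratic and Frobenius action
  have core : ∀ (β : F) (y z : K), y ^ 2 = φ β * y - φ α → z = φ β - y →
      y * z = φ α ∧ z ^ 2 = φ β * z - φ α ∧ (y ^ q = y ∨ y ^ q = z) ∧ (z ^ q = y ∨ z ^ q = z) := by
    intro β y z hyroot hzdef
    have hyz : y * z = φ α := by rw [hzdef]; linear_combination -hyroot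
    have hsum : y + z = φ β := by rw [hzdef]; ring
    have hzroot : z ^ 2 = φ β * z - φ α := by rw [hzdef]; linear_combination hyroot
    have hconj : ∀ w : K, w ^ 2 = φ β * w - φ α → (w ^ q) ^ 2 = φ β * w ^ q - φ α := by
      intro w hw
      have h1 : (w ^ 2) ^ q = (φ β * w - φ α) ^ q := by rw [hw]
      rw [hsubq, mul_pow, hφq, hφq] at h1
      rw [pow_right_comm]
      exact h1
    have hsplit : ∀ w : K, w ^ 2 = φ β * w - φ α → w = y ∨ w = z := by
      intro w hw
      have h0 : (w - y) * (w - z) = 0 := by linear_combination hw - w * hsum + hyz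
      rcases mul_eq_zero.1 h0 with h | h
      · exact Or.inl (sub_eq_zero.1 h)
      · exact Or.inr (sub_eq_zero.1 h)
    exact ⟨hyz, hzroot, hsplit _ (hconj y hyroot), hsplit _ (hconj z hzroot)⟩
  constructor
  · -- part 1
    apply main
    intro β y z hyroot hzdef
    obtain ⟨hyz, hzroot, hyq, hzq⟩ := core β y z hyroot hzdef
    have hy0 : y ≠ 0 := fun h => hα' (by rw [← hyz, h, zero_mul])
    have hz0 : z ≠ 0 := fun h => hα' (by rw [← hyz, h, mul_zero])
    have hfix : ∀ u v : K, u * v = φ α → u ≠ 0 → v ≠ 0 →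
        (u ^ q = u ∨ u ^ q = v) → (v ^ q = u ∨ v ^ q = v) → u ^ q ^ 2 = u := by
      intro u v huv hu0 hv0 huq hvq
      have hpow : u ^ q ^ 2 = (u ^ q) ^ q := by rw [← pow_mul, pow_two]
      rcases huq with h | h
      · rw [hpow, h, h]
      · rcases hvq with h2 | h2
        · rw [hpow, h, h2]
        · have hvv : v * v = u * v := by
            have h3 : (u * v) ^ q = φ α := by rw [huv, hφq]
            rw [mul_pow, h, h2] at h3
            rw [h3, huv]
          have hveq : v = u := mul_right_cancel₀ hv0 hvv
          rw [hpow, h, h2, hveq]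
    have hq2 : 1 ≤ q ^ 2 := Nat.one_le_pow _ _ hq1
    have hone : ∀ u : K, u ≠ 0 → u ^ q ^ 2 = u → u ^ (q ^ 2 - 1) = 1 := by
      intro u hu0 hu
      have h1 : u ^ (q ^ 2 - 1) * u = 1 * u := by
        rw [← pow_succ, Nat.sub_add_cancel hq2, hu, one_mul]
      exact mul_right_cancel₀ hu0 h1
    exact ⟨hone y hy0 (hfix y z hyz hy0 hz0 hyq hzq),
      hone z hz0 (hfix z y (by rw [mul_comm]; exact hyz) hz0 hy0 hzq.symm hyq.symm)⟩
  · -- part 2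
    intro hodd hsq
    obtain ⟨γ, hγ⟩ := hsq
    have hγ0 : γ ≠ 0 := fun h => hα (by rw [hγ, h, mul_zero])
    obtain ⟨t, ht⟩ := hodd
    have h2a : 2 ∣ q - 1 := by omega
    have h2b : 2 ∣ q + 1 := by omega
    have hfac : q ^ 2 - 1 = (q + 1) * (q - 1) := by simpa using Nat.sq_sub_sq q 1
    have hm1 : (q ^ 2 - 1) / 2 = (q - 1) * ((q + 1) / 2) := by
      rw [hfac, mul_comm, Nat.mul_div_assoc _ h2b]
    have hm2 : (q ^ 2 - 1) / 2 = (q + 1) * ((q - 1) / 2) := by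
      rw [hfac, Nat.mul_div_assoc _ h2a]
    apply main
    intro β y z hyroot hzdef
    obtain ⟨hyz, hzroot, hyq, hzq⟩ := core β y z hyroot hzdef
    have hy0 : y ≠ 0 := fun h => hα' (by rw [← hyz, h, zero_mul])
    have hz0 : z ≠ 0 := fun h => hα' (by rw [← hyz, h, mul_zero])
    have hum : ∀ u v : K, u * v = φ α → u ≠ 0 → (u ^ q = u ∨ u ^ q = v) →
        u ^ ((q ^ 2 - 1) / 2) = 1 := by
      intro u v huv hu0 huq
      rcases huq with h | h
      · have h1 : u ^ (q - 1) = 1 := by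
          have h2 : u ^ (q - 1) * u = 1 * u := by
            rw [← pow_succ, Nat.sub_add_cancel hq1, h, one_mul]
          exact mul_right_cancel₀ hu0 h2
        rw [hm1, pow_mul, h1, one_pow]
      · have h1 : u ^ (q + 1) = φ α := by
          rw [pow_succ, h, mul_comm v u, huv]
        have h3 : 2 * ((q - 1) / 2) = q - 1 := Nat.mul_div_cancel' h2a
        rw [hm2, pow_mul, h1, hγ, map_mul, ← pow_two, ← pow_mul, h3, ← map_pow,
          FiniteField.pow_card_sub_one_eq_one γ hγ0, map_one]
    exact ⟨hum y z hyz hy0 hyq, hum z y (by rw [mul_comm]; exact hyz) hz0 hzq.symm⟩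
end

section
/- Let $q$ be an odd prime power, let $\alpha \in \mathbb{F}_q^\times$ be a nonsquare, and let $n$ be a positive integer with $\alpha^n = \alpha$ and $D_n(\beta,\alpha) = \beta$ for all $\beta \in \mathbb{F}_q$. Then $n \equiv 1 \pmod{q^2-1}$ or $n \equiv q \pmod{q^2-1}$. -/
open Polynomial


private lemma step2 {q k : ℤ} (hq : 3 ≤ q) (hk : Odd k) (C : ℤ)
    (h2 : (q - 1) ∣ 2 * C) (hall : ∀ t : ℤ, (q ^ 2 - 1) ∣ (k + t * (q - 1)) * C) :
    (q ^ 2 - 1) ∣ C := by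
  have hq1 : (q - 1) ≠ 0 := by omega
  have hN0 : (q ^ 2 - 1) ≠ 0 := by nlinarith
  have hkC : (q ^ 2 - 1) ∣ k * C := by simpa using hall 0
  have hq1C : (q ^ 2 - 1) ∣ (q - 1) * C := by
    have := dvd_sub (hall 1) (hall 0)
    have e : (k + 1 * (q - 1)) * C - (k + 0 * (q - 1)) * C = (q - 1) * C := by ring
    rwa [e] at this
  -- (q+1) ∣ C
  obtain ⟨c, hc⟩ := hq1C
  have hc' : C = (q + 1) * c := by
    have : (q - 1) * C = (q - 1) * ((q + 1) * c) := by rw [hc]; ring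
    exact mul_left_cancel₀ hq1 this
  -- (q-1) ∣ 4c
  have h4c : (q - 1) ∣ 4 * c := by
    have h1 : (q - 1) ∣ 2 * ((q + 1) * c) := by rw [← hc']; exact h2
    have h2' : (q - 1) ∣ 2 * (q - 1) * c := ⟨2 * c, by ring⟩
    have := dvd_sub h1 h2'
    have e : 2 * ((q + 1) * c) - 2 * (q - 1) * c = 4 * c := by ring
    rwa [e] at this
  obtain ⟨m, hm⟩ := h4c
  have h4A : 4 * C = (q ^ 2 - 1) * m := by
    rw [hc']
    have : 4 * ((q + 1) * c) = (q + 1) * (4 * c) := by ring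
    rw [this, hm]; ring
  -- N ∣ kC gives 4 ∣ k * m
  obtain ⟨d, hd⟩ := hkC
  have hkm : (4 : ℤ) ∣ k * m := by
    refine ⟨d, ?_⟩
    have h1 : (q ^ 2 - 1) * (k * m) = (q ^ 2 - 1) * (4 * d) := by
      calc (q ^ 2 - 1) * (k * m) = k * ((q ^ 2 - 1) * m) := by ring
        _ = k * (4 * C) := by rw [h4A]
        _ = 4 * (k * C) := by ring
        _ = (q ^ 2 - 1) * (4 * d) := by rw [hd]; ring
    exact mul_left_cancel₀ hN0 h1
  have hcop : IsCoprime (4 : ℤ) k := by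
    obtain ⟨j, hj⟩ := hk
    have : IsCoprime (2 : ℤ) k := ⟨-j, 1, by rw [hj]; ring⟩
    have h4 : (4 : ℤ) = 2 ^ 2 := by norm_num
    rw [h4]
    exact this.pow_left
  have h4m : (4 : ℤ) ∣ m := hcop.dvd_of_dvd_mul_left hkm
  obtain ⟨m', hm'⟩ := h4m
  refine ⟨m', ?_⟩
  have : (4 : ℤ) * C = 4 * ((q ^ 2 - 1) * m') := by rw [h4A, hm']; ring
  linarith

private lemma ntlemma {q k A B : ℤ} (hq : 3 ≤ q) (hk : Odd k) (hAB : A - B = q - 1)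
    (h2 : (q - 1) ∣ 2 * A)
    (H : ∀ t : ℤ, (q ^ 2 - 1) ∣ (k + t * (q - 1)) * A ∨ (q ^ 2 - 1) ∣ (k + t * (q - 1)) * B) :
    (q ^ 2 - 1) ∣ A ∨ (q ^ 2 - 1) ∣ B := by
  have h2B : (q - 1) ∣ 2 * B := by
    have : 2 * B = 2 * A - 2 * (q - 1) := by linarith
    rw [this]
    exact dvd_sub h2 ⟨2, by ring⟩
  have hq1 : (q - 1) ≠ 0 := by omega
  by_cases hA : ∀ t : ℤ, (q ^ 2 - 1) ∣ (k + t * (q - 1)) * A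
  · exact Or.inl (step2 hq hk A h2 hA)
  by_cases hB : ∀ t : ℤ, (q ^ 2 - 1) ∣ (k + t * (q - 1)) * B
  · exact Or.inr (step2 hq hk B h2B hB)
  exfalso
  push_neg at hA hB
  obtain ⟨ta, hta⟩ := hA
  obtain ⟨tb, htb⟩ := hB
  have hA' : (q ^ 2 - 1) ∣ (k + tb * (q - 1)) * A := (H tb).resolve_right htb
  have hB' : (q ^ 2 - 1) ∣ (k + ta * (q - 1)) * B := (H ta).resolve_left hta
  -- key equivalences
  have keyA : ∀ t : ℤ, (q ^ 2 - 1) ∣ (k + t * (q - 1)) * A ↔ (q + 1) ∣ (t - tb) * A := by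
    intro t
    constructor
    · intro hdvd
      have h1 := dvd_sub hdvd hA'
      have e : (k + t * (q - 1)) * A - (k + tb * (q - 1)) * A = (q - 1) * ((t - tb) * A) := by ring
      rw [e] at h1
      have e2 : (q ^ 2 - 1 : ℤ) = (q - 1) * (q + 1) := by ring
      rw [e2] at h1
      exact (mul_dvd_mul_iff_left hq1).mp h1
    · intro hdvd
      have h1 : (q ^ 2 - 1) ∣ (q - 1) * ((t - tb) * A) := by
        have e2 : (q ^ 2 - 1 : ℤ) = (q - 1) * (q + 1) := by ring
        rw [e2]
        exact mul_dvd_mul_left _ hdvd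
      have := dvd_add h1 hA'
      have e : (q - 1) * ((t - tb) * A) + (k + tb * (q - 1)) * A = (k + t * (q - 1)) * A := by ring
      rwa [e] at this
  have keyB : ∀ t : ℤ, (q ^ 2 - 1) ∣ (k + t * (q - 1)) * B ↔ (q + 1) ∣ (t - ta) * B := by
    intro t
    constructor
    · intro hdvd
      have h1 := dvd_sub hdvd hB'
      have e : (k + t * (q - 1)) * B - (k + ta * (q - 1)) * B = (q - 1) * ((t - ta) * B) := by ring
      rw [e] at h1
      have e2 : (q ^ 2 - 1 : ℤ) = (q - 1) * (q + 1) := by ring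
      rw [e2] at h1
      exact (mul_dvd_mul_iff_left hq1).mp h1
    · intro hdvd
      have h1 : (q ^ 2 - 1) ∣ (q - 1) * ((t - ta) * B) := by
        have e2 : (q ^ 2 - 1 : ℤ) = (q - 1) * (q + 1) := by ring
        rw [e2]
        exact mul_dvd_mul_left _ hdvd
      have := dvd_add h1 hB'
      have e : (q - 1) * ((t - ta) * B) + (k + ta * (q - 1)) * B = (k + t * (q - 1)) * B := by ring
      rwa [e] at this
  set δ : ℤ := ta - tb with hδ
  have Htr : ∀ s : ℤ, (q + 1) ∣ s * A ∨ (q + 1) ∣ (s - δ) * B := by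
    intro s
    have := H (s + tb)
    rw [keyA, keyB] at this
    have e1 : s + tb - tb = s := by ring
    have e2 : s + tb - ta = s - δ := by rw [hδ]; ring
    rw [e1, e2] at this
    exact this
  have hPδ : ¬ (q + 1) ∣ δ * A := by
    rw [hδ, ← keyA ta]; exact hta
  have hQδ : ¬ (q + 1) ∣ δ * B := by
    intro hcon
    apply htb
    rw [keyB tb]
    have e : (tb - ta) * B = -(δ * B) := by rw [hδ]; ring
    rw [e]
    exact hcon.neg_right
  -- ¬ (q+1) ∣ A, ¬ (q+1) ∣ B
  have hP1 : ¬ (q + 1) ∣ A := fun hcon => hPδ (Dvd.dvd.mul_left hcon δ)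
  have hQ1 : ¬ (q + 1) ∣ B := fun hcon => hQδ (Dvd.dvd.mul_left hcon δ)
  -- P x → Q x
  have PQ : ∀ x : ℤ, (q + 1) ∣ x * A → (q + 1) ∣ x * B := by
    intro x hx
    rcases Htr (x + δ) with hp | hq'
    · exfalso
      apply hPδ
      have := dvd_sub hp hx
      have e : (x + δ) * A - x * A = δ * A := by ring
      rwa [e] at this
    · have e : x + δ - δ = x := by ring
      rwa [e] at hq'
  -- P (2δ)
  have hP2δ : (q + 1) ∣ (2 * δ) * A := by
    rcases Htr (2 * δ) with hp | hq'
    · exact hp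
    · exfalso
      apply hQδ
      have e : (2 * δ - δ) * B = δ * B := by ring
      rwa [e] at hq'
  -- Q y → P y
  have QP : ∀ y : ℤ, (q + 1) ∣ y * B → (q + 1) ∣ y * A := by
    intro y hy
    have h1 : (q + 1) ∣ (2 * δ + y) * A := by
      rcases Htr (2 * δ + y) with hp | hq'
      · exact hp
      · exfalso
        apply hQδ
        have e : (2 * δ + y - δ) * B = δ * B + y * B := by ring
        rw [e] at hq'
        have := dvd_sub hq' hy
        have e2 : δ * B + y * B - y * B = δ * B := by ring
        rwa [e2] at this
    have := dvd_sub h1 hP2δ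
    have e : (2 * δ + y) * A - (2 * δ) * A = y * A := by ring
    rwa [e] at this
  -- from s = 1 : Q(1 - δ), hence P(1 - δ)
  have hQ1δ : (q + 1) ∣ (1 - δ) * B := by
    rcases Htr 1 with hp | hq'
    · exfalso; exact hP1 (by simpa using hp)
    · exact hq'
  have hP1mδ : (q + 1) ∣ (1 - δ) * A := QP _ hQ1δ
  -- from s = 1 + δ : P(1 + δ)
  have hP1pδ : (q + 1) ∣ (1 + δ) * A := by
    rcases Htr (1 + δ) with hp | hq'
    · exact hp
    · exfalso
      apply hQ1
      have e : (1 + δ - δ) * B = B := by ring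
      rwa [e] at hq'
  -- P 2 : (q+1) ∣ 2A
  have hP2 : (q + 1) ∣ 2 * A := by
    have := dvd_add hP1mδ hP1pδ
    have e : (1 - δ) * A + (1 + δ) * A = 2 * A := by ring
    rwa [e] at this
  have hQ2 : (q + 1) ∣ 2 * B := by
    have := PQ 2 (by simpa using hP2)
    simpa using this
  -- (q+1) ∣ 4
  have h4 : (q + 1) ∣ 4 := by
    have := dvd_sub hP2 hQ2
    have e : 2 * A - 2 * B = 2 * (q - 1) := by rw [← hAB]; ring
    rw [e] at this
    have e2 : (4 : ℤ) = 2 * (q + 1) - 2 * (q - 1) := by ring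
    rw [e2]
    exact dvd_sub ⟨2, by ring⟩ this
  have hq3 : q = 3 := by
    have h1 : q + 1 ≤ 4 := Int.le_of_dvd (by norm_num) h4
    omega
  subst hq3
  norm_num at hP2 hQ2 hP1 hQ1
  omega

private lemma dickson_eval_add {R : Type*} [CommRing R] (x y : R) :
    ∀ m : ℕ, (dickson 1 (x * y) m).eval (x + y) = x ^ m + y ^ m
  | 0 => by
    simp only [dickson_zero, eval_sub, eval_natCast, eval_ofNat, pow_zero]
    norm_num
  | 1 => by simp [dickson_one]
  | m + 2 => by
    simp only [dickson_add_two, eval_sub, eval_mul, eval_X, eval_C,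
      dickson_eval_add x y (m + 1), dickson_eval_add x y m]
    ring

private lemma quad_split {L : Type*} [Field L] {u v a : L} {m : ℕ}
    (huv : u * v = a) (ha : a ^ m = a) (key : u ^ m + v ^ m = u + v) :
    u ^ m = u ∨ u ^ m = v := by
  have hc : u ^ m * v ^ m = u * v := by
    rw [← mul_pow, huv, ha, ← huv]
  have hz : (u ^ m - u) * (u ^ m - v) = 0 := by
    linear_combination u ^ m * key - hc
  rcases mul_eq_zero.mp hz with h | h
  · left; exact sub_eq_zero.mp h
  · right; exact sub_eq_zero.mp h

private lemma mem_range_of_pow_card {F K : Type*} [Field F] [Fintype F] [Field K] [Fintype K]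
    (e : F →+* K) (x : K) (hx : x ^ (Fintype.card F) = x) : ∃ β : F, e β = x := by
  classical
  set q := Fintype.card F with hq
  have hq1 : 1 < q := Fintype.one_lt_card
  set P : K[X] := X ^ q - X with hP
  have hPne : P ≠ 0 := FiniteField.X_pow_card_sub_X_ne_zero K hq1
  have hPdeg : P.natDegree = q := FiniteField.X_pow_card_sub_X_natDegree_eq K hq1
  have hroot : ∀ y : K, y ^ q = y → y ∈ P.roots.toFinset := by
    intro y hy
    rw [Multiset.mem_toFinset, mem_roots hPne]
    simp [hP, IsRoot.def, hy]
  set S : Finset K := Finset.univ.image e with hS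
  have hScard : S.card = q := by
    rw [hS, Finset.card_image_of_injective _ e.injective, Finset.card_univ]
  have hSsub : S ⊆ P.roots.toFinset := by
    intro y hy
    rw [hS, Finset.mem_image] at hy
    obtain ⟨β, -, rfl⟩ := hy
    apply hroot
    rw [← map_pow, FiniteField.pow_card]
  by_contra hcon
  push_neg at hcon
  have hxS : x ∉ S := by
    intro hmem
    rw [hS, Finset.mem_image] at hmem
    obtain ⟨β, -, hβ⟩ := hmem
    exact hcon β hβ
  have hsub2 : insert x S ⊆ P.roots.toFinset := by
    intro y hy
    rcases Finset.mem_insert.mp hy with rfl | hy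
    · exact hroot y hx
    · exact hSsub hy
  have hcard : q + 1 ≤ P.roots.toFinset.card := by
    have := Finset.card_le_card hsub2
    rwa [Finset.card_insert_of_notMem hxS, hScard] at this
  have hcard2 : P.roots.toFinset.card ≤ q := by
    calc P.roots.toFinset.card ≤ Multiset.card P.roots := Multiset.toFinset_card_le _
      _ ≤ P.natDegree := P.card_roots'
      _ = q := hPdeg
  omega

private lemma alg_part {F K : Type*} [Field F] [Fintype F] [Field K] [Fintype K] [Algebra F K]
    (hcardK : Fintype.card K = Fintype.card F ^ 2)
    (α : F) (hα : α ≠ 0) (hns : ¬ IsSquare α) (n : ℕ)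
    (hfix : α ^ n = α) (h : ∀ β : F, (dickson 1 α n).eval β = β) :
    ∃ k : ℤ, Odd k ∧ ∀ t : ℤ,
      ((Fintype.card F : ℤ) ^ 2 - 1) ∣
        (k + t * ((Fintype.card F : ℤ) - 1)) * ((n : ℤ) - 1) ∨
      ((Fintype.card F : ℤ) ^ 2 - 1) ∣
        (k + t * ((Fintype.card F : ℤ) - 1)) * ((n : ℤ) - (Fintype.card F : ℤ)) := by
  classical
  set q := Fintype.card F with hq
  have hq1 : 1 < q := Fintype.one_lt_card
  set e : F →+* K := algebraMap F K with he
  have hinj : Function.Injective e := e.injective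
  set αK : K := e α with hαK
  have hαK0 : αK ≠ 0 := fun hc => hα (hinj (by rw [map_zero]; exact hc))
  set uα : Kˣ := Units.mk0 αK hαK0 with huα
  -- generator of Kˣ
  obtain ⟨g, hg⟩ := IsCyclic.exists_generator (α := Kˣ)
  have hordg : orderOf g = q ^ 2 - 1 := by
    rw [orderOf_eq_card_of_forall_mem_zpowers hg, Nat.card_eq_fintype_card,
      Fintype.card_units, hcardK]
  have hcast : ((q ^ 2 - 1 : ℕ) : ℤ) = (q : ℤ) ^ 2 - 1 := by
    have h1 : (1 : ℕ) ≤ q ^ 2 := Nat.one_le_pow _ _ (by omega)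
    push_cast [Nat.cast_sub h1]
    ring
  have zfact : ∀ w : ℤ, g ^ w = 1 ↔ ((q : ℤ) ^ 2 - 1) ∣ w := by
    intro w
    rw [← orderOf_dvd_iff_zpow_eq_one, hordg, hcast]
  -- the exponent j of αK
  obtain ⟨j, hj⟩ := Subgroup.mem_zpowers_iff.mp (hg uα)
  have hαq1 : uα ^ ((q : ℤ) - 1) = 1 := by
    have h1 : α ^ (q - 1) = 1 := FiniteField.pow_card_sub_one_eq_one α hα
    have h2 : uα ^ (q - 1 : ℕ) = 1 := by
      ext
      rw [Units.val_pow_eq_pow_val, Units.val_one]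
      show αK ^ (q - 1) = 1
      rw [hαK, ← map_pow, h1, map_one]
    have h3 : ((q - 1 : ℕ) : ℤ) = (q : ℤ) - 1 := by
      push_cast [Nat.cast_sub (le_of_lt hq1)]; ring
    rw [← h3, zpow_natCast, h2]
  have hq1Z : (1 : ℤ) < (q : ℤ) := by exact_mod_cast hq1
  have hqm1ne : ((q : ℤ) - 1) ≠ 0 := by omega
  have hjdvd : ((q : ℤ) + 1) ∣ j := by
    have h1 : g ^ (j * ((q : ℤ) - 1)) = 1 := by
      rw [zpow_mul, hj, hαq1]
    rw [zfact] at h1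
    obtain ⟨c, hc⟩ := h1
    refine ⟨c, mul_right_cancel₀ hqm1ne ?_⟩
    rw [hc]; ring
  obtain ⟨k, hk⟩ := hjdvd
  -- k is odd
  have hkodd : Odd k := by
    rw [← Int.not_even_iff_odd]
    intro hkev
    obtain ⟨k', hk'⟩ := hkev
    set y : Kˣ := g ^ (((q : ℤ) + 1) * k') with hy
    have hyq : (y : K) ^ q = y := by
      have h1 : y ^ ((q : ℤ) - 1) = 1 := by
        rw [hy, ← zpow_mul, zfact]
        exact ⟨k', by ring⟩
      have h3 : ((q - 1 : ℕ) : ℤ) = (q : ℤ) - 1 := by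
        push_cast [Nat.cast_sub (le_of_lt hq1)]; ring
      rw [← h3, zpow_natCast] at h1
      have h2 : (y : K) ^ (q - 1) = 1 := by
        rw [← Units.val_pow_eq_pow_val, h1, Units.val_one]
      have h4 : (y : K) ^ q = (y : K) ^ (q - 1) * y := by
        rw [← pow_succ]
        congr 1
        omega
      rw [h4, h2, one_mul]
    obtain ⟨β, hβ⟩ := mem_range_of_pow_card e (y : K) hyq
    apply hns
    refine ⟨β, ?_⟩
    apply hinj
    rw [map_mul, hβ]
    have h5 : uα = y ^ (2 : ℤ) := by
      rw [hy, ← zpow_mul, ← hj]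
      congr 1
      rw [hk, hk']
      ring
    have h6 : (uα : K) = (y : K) * (y : K) := by
      rw [h5]
      push_cast [zpow_two]
      rfl
    rw [show e α = (uα : K) from rfl, h6]
  refine ⟨k, hkodd, ?_⟩
  -- main congruence condition
  intro t
  set w : ℤ := k + t * ((q : ℤ) - 1) with hw
  set u : Kˣ := g ^ w with hu
  have hupow : g ^ (w * ((q : ℤ) + 1)) = uα := by
    have h1 : w * ((q : ℤ) + 1) = j + ((q : ℤ) ^ 2 - 1) * t := by
      rw [hw, hk]; ring
    rw [h1, zpow_add, hj, zpow_mul, (zfact _).mpr dvd_rfl, one_zpow, mul_one]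
  have huq : u ^ q = uα * u⁻¹ := by
    have h1 : u ^ q * u = uα := by
      rw [hu, ← zpow_natCast, ← zpow_mul, ← zpow_add, ← hupow]
      congr 1
      ring
    exact eq_mul_inv_of_mul_eq h1
  -- frobenius
  have hchar := ringChar.charP F
  set p := ringChar F with hp
  obtain ⟨m, hpprime, hqcard⟩ := FiniteField.card F p
  haveI : Fact p.Prime := ⟨hpprime⟩
  haveI : CharP K p := charP_of_injective_algebraMap (algebraMap F K).injective p
  have frob : ∀ a b : K, (a + b) ^ q = a ^ q + b ^ q := by
    intro a b
    rw [hq, hqcard]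
    exact add_pow_char_pow ..
  set x : K := (u : K) + αK * ((u⁻¹ : Kˣ) : K) with hx
  have hxq : x ^ q = x := by
    rw [hx, frob]
    have h1 : ((u : K)) ^ q = αK * ((u⁻¹ : Kˣ) : K) := by
      rw [← Units.val_pow_eq_pow_val, huq, Units.val_mul]
      rfl
    have h2 : (αK * ((u⁻¹ : Kˣ) : K)) ^ q = (u : K) := by
      rw [mul_pow]
      have h3 : αK ^ q = αK := by
        rw [hαK, ← map_pow, FiniteField.pow_card]
      have h4 : ((u⁻¹ : Kˣ) : K) ^ q = (u : K) * ((uα⁻¹ : Kˣ) : K) := by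
        rw [← Units.val_pow_eq_pow_val, inv_pow, huq, mul_inv_rev, inv_inv, Units.val_mul]
      rw [h3, h4]
      have h5 : αK * ((u : K) * ((uα⁻¹ : Kˣ) : K)) = (u : K) * (αK * ((uα⁻¹ : Kˣ) : K)) := by
        ring
      rw [h5]
      have h6 : αK * ((uα⁻¹ : Kˣ) : K) = 1 := by
        rw [show αK = (uα : K) from rfl, ← Units.val_mul, mul_inv_cancel, Units.val_one]
      rw [h6, mul_one]
    rw [h1, h2, add_comm]
  obtain ⟨β, hβ⟩ := mem_range_of_pow_card e x hxq
  have huv : (u : K) * (αK * ((u⁻¹ : Kˣ) : K)) = αK := by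
    have h5 : (u : K) * (αK * ((u⁻¹ : Kˣ) : K)) = αK * ((u : K) * ((u⁻¹ : Kˣ) : K)) := by
      ring
    rw [h5, Units.mul_inv, mul_one]
  have hαKn : αK ^ n = αK := by
    rw [hαK, ← map_pow, hfix]
  have hkey : (u : K) ^ n + (αK * ((u⁻¹ : Kˣ) : K)) ^ n = (u : K) + αK * ((u⁻¹ : Kˣ) : K) := by
    have hd := dickson_eval_add (u : K) (αK * ((u⁻¹ : Kˣ) : K)) n
    rw [huv] at hd
    rw [← hx] at hd ⊢
    rw [← hd]
    have hmap : dickson 1 αK n = Polynomial.map e (dickson 1 α n) := by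
      rw [map_dickson]
    rw [hmap, ← hβ, Polynomial.eval_map, Polynomial.eval₂_at_apply, h β]
  rcases quad_split huv hαKn hkey with hcase | hcase
  · left
    have hu1 : u ^ n = u := by
      ext
      rw [Units.val_pow_eq_pow_val]
      exact hcase
    have h1 : g ^ (w * ((n : ℤ) - 1)) = 1 := by
      have h2 : g ^ (w * (n : ℤ)) = g ^ w := by
        rw [zpow_mul, zpow_natCast, ← hu, hu1]
      rw [mul_sub, mul_one, zpow_sub, h2, mul_inv_cancel]
    rw [zfact] at h1
    exact h1
  · right
    have hu1 : u ^ n * u = uα := by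
      ext
      rw [Units.val_mul, Units.val_pow_eq_pow_val, hcase]
      rw [mul_assoc]
      have : ((u⁻¹ : Kˣ) : K) * (u : K) = 1 := Units.inv_mul u
      rw [this, mul_one]
      rfl
    have h1 : g ^ (w * ((n : ℤ) + 1) - ((q : ℤ) + 1) * k) = 1 := by
      have h2 : g ^ (w * ((n : ℤ) + 1)) = uα := by
        have h3 : w * ((n : ℤ) + 1) = w * (n : ℤ) + w := by ring
        rw [h3, zpow_add, zpow_mul, zpow_natCast, ← hu, hu1]
      have h4 : g ^ (((q : ℤ) + 1) * k) = uα := by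
        rw [← hk, hj]
      rw [zpow_sub, h2, h4, mul_inv_cancel]
    rw [zfact] at h1
    have h5 : w * ((n : ℤ) - (q : ℤ)) =
        (w * ((n : ℤ) + 1) - ((q : ℤ) + 1) * k) - ((q : ℤ) ^ 2 - 1) * t := by
      rw [hw]; ring
    rw [h5]
    exact dvd_sub h1 ⟨t, rfl⟩
/-- For odd `q` and nonsquare `α` with `α^n = α`, if `D_n(·, α)` is the identity
on `𝔽_q` then `n ≡ 1` or `n ≡ q (mod q²-1)`. -/
theorem dickson_identity_nonsquare (F : Type*) [Field F] [Fintype F]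
    (hodd : Odd (Fintype.card F)) (α : F) (hα : α ≠ 0) (hns : ¬ IsSquare α)
    (n : ℕ) (hn : 0 < n) (hfix : α ^ n = α)
    (h : ∀ β : F, (dickson 1 α n).eval β = β) :
    n ≡ 1 [MOD Fintype.card F ^ 2 - 1] ∨ n ≡ Fintype.card F [MOD Fintype.card F ^ 2 - 1] := by
  classical
  set q := Fintype.card F with hq
  have hq1 : 1 < q := Fintype.one_lt_card
  have hq3 : 3 ≤ q := by
    rcases hodd with ⟨j, hj⟩
    omega
  -- the Dickson condition inside F
  have hcondF : ∀ u : F, u ≠ 0 → (u ^ n = u ∨ u ^ (n + 1) = α) := by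
    intro u hu
    have huv : u * (α * u⁻¹) = α := by field_simp
    have hd := dickson_eval_add u (α * u⁻¹) n
    rw [huv] at hd
    have key : u ^ n + (α * u⁻¹) ^ n = u + α * u⁻¹ := hd.symm.trans (h _)
    rcases quad_split huv hfix key with h1 | h1
    · exact Or.inl h1
    · right
      rw [pow_succ, h1]
      field_simp
  -- (q-1) divides 2(n-1)
  have hdvd2 : ((q : ℤ) - 1) ∣ 2 * ((n : ℤ) - 1) := by
    obtain ⟨γ, hγ⟩ := IsCyclic.exists_generator (α := Fˣ)
    have hord : orderOf γ = q - 1 := by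
      rw [orderOf_eq_card_of_forall_mem_zpowers hγ, Nat.card_eq_fintype_card,
        Fintype.card_units]
    have hsq : ((γ : F) ^ 2) ^ n = (γ : F) ^ 2 := by
      rcases hcondF ((γ : F) ^ 2) (pow_ne_zero _ (Units.ne_zero γ)) with h1 | h1
      · exact h1
      · exfalso
        apply hns
        refine ⟨(γ : F) ^ (n + 1), ?_⟩
        rw [← h1, ← pow_add, ← pow_mul]
        congr 1
        ring
    have hsqU : γ ^ (2 * n) = γ ^ 2 := by
      ext
      rw [Units.val_pow_eq_pow_val, Units.val_pow_eq_pow_val]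
      rw [← pow_mul] at hsq
      exact hsq
    have hz : γ ^ (2 * ((n : ℤ) - 1)) = 1 := by
      have e1 : 2 * ((n : ℤ) - 1) = ((2 * n : ℕ) : ℤ) - ((2 : ℕ) : ℤ) := by push_cast; ring
      rw [e1, zpow_sub, zpow_natCast, zpow_natCast, hsqU, mul_inv_cancel]
    rw [← orderOf_dvd_iff_zpow_eq_one, hord] at hz
    have hcast : ((q - 1 : ℕ) : ℤ) = (q : ℤ) - 1 := by
      push_cast [Nat.cast_sub (le_of_lt hq1)]; ring
    rwa [hcast] at hz
  -- build the quadratic extension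
  have hirr : Irreducible ((X : F[X]) ^ 2 - C α) := by
    apply X_pow_sub_C_irreducible_of_prime Nat.prime_two
    intro b hb
    exact hns ⟨b, by rw [← hb, sq]⟩
  haveI hfact : Fact (Irreducible ((X : F[X]) ^ 2 - C α)) := ⟨hirr⟩
  have hfne : ((X : F[X]) ^ 2 - C α) ≠ 0 := hirr.ne_zero
  letI : Fintype (AdjoinRoot ((X : F[X]) ^ 2 - C α)) :=
    Module.fintypeOfFintype (AdjoinRoot.powerBasis hfne).basis
  have hcardK : Fintype.card (AdjoinRoot ((X : F[X]) ^ 2 - C α)) = Fintype.card F ^ 2 := by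
    rw [Module.card_eq_pow_finrank (K := F), (AdjoinRoot.powerBasis hfne).finrank]
    congr 1
    show ((X : F[X]) ^ 2 - C α).natDegree = 2
    rw [natDegree_X_pow_sub_C]
  obtain ⟨k, hkodd, H⟩ := alg_part hcardK α hα hns n hfix h
  have hfin := ntlemma (q := (q : ℤ)) (k := k) (A := (n : ℤ) - 1) (B := (n : ℤ) - (q : ℤ))
    (by exact_mod_cast hq3) hkodd (by ring) hdvd2 H
  have hc : ((q ^ 2 - 1 : ℕ) : ℤ) = (q : ℤ) ^ 2 - 1 := by
    have h1 : (1 : ℕ) ≤ q ^ 2 := Nat.one_le_pow _ _ (by omega)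
    push_cast [Nat.cast_sub h1]; ring
  rcases hfin with h1 | h1
  · left
    rw [Nat.modEq_iff_dvd, hc]
    have e1 : ((1 : ℕ) : ℤ) - (n : ℤ) = -((n : ℤ) - 1) := by push_cast; ring
    rw [e1]
    exact h1.neg_right
  · right
    rw [Nat.modEq_iff_dvd, hc]
    have e1 : (q : ℤ) - (n : ℤ) = -((n : ℤ) - (q : ℤ)) := by ring
    rw [e1]
    exact h1.neg_right
end
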